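/- arXiv:0707.0840 — 3 statements merged into one kernel-verified Lean document; each statement's English description precedes it below -/
import Mathlib

section
/- Let T be a compact operator on a Hilbert space H, (ξ_k) a complete orthonormal system of (ker T)^⊥ (or of a closed subspace containing the support of T), and 0 < p ≤ 2. Then ∑_k μ_k(T)^p ≤ ∑_k ‖T ξ_k‖^p. -/
/-!
Choose greedily unit eigenvectors `η₀, η₁, …` of `T†T`: `ηₙ` is orthogonal to `Kₙ = span {ηᵢ | i < n}`
and has eigenvalue `σₙ²`, where `σₙ = ‖T‖` on `Kₙᗮ` (a compact positive operator attains its norm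
as an eigenvalue). As `dim Kₙ ≤ n`, `μₙ(T) ≤ σₙ`. The vectors `T ηₖ / σₖ` are orthonormal, so
Bessel gives `∑ₖ σₖ² |⟨ηₖ, x⟩|² ≤ ‖T x‖²`, and for `‖x‖ ≤ 1` Hölder with exponent `2/p ≥ 1` turns
this into `∑ₖ σₖ^p |⟨ηₖ, x⟩|² ≤ ‖T x‖^p`. Each `ηₖ` with `σₖ ≠ 0` lies in the range of `T†`, hence
in the closed span of the `ξₙ`, so Parseval gives `σₖ^p = ∑ₙ σₖ^p |⟨ηₖ, ξₙ⟩|²`. Summing over `k`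
and exchanging the two sums proves the inequality.
-/

open ContinuousLinearMap

variable {H : Type*} [NormedAddCommGroup H] [InnerProductSpace ℂ H] [CompleteSpace H]

/-- The `k`-th singular value (approximation number) of a bounded operator `T`. -/
noncomputable def singularValue (T : H →L[ℂ] H) (k : ℕ) : ℝ :=
  sInf ((fun F : H →L[ℂ] H => ‖T - F‖) ''
    {F | Module.rank ℂ (LinearMap.range (F : H →ₗ[ℂ] H)) ≤ (k : Cardinal)})

open Submodule
open scoped InnerProductSpace

theorem Real.sum_mul_rpow_le_rpow_sum_mul {ι : Type*} (s : Finset ι) {w t : ι → ℝ}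
    (hw : ∀ i, 0 ≤ w i) (ht : ∀ i, 0 ≤ t i) (hw1 : ∑ i ∈ s, w i ≤ 1) {q : ℝ} (hq0 : 0 < q)
    (hq1 : q ≤ 1) : ∑ i ∈ s, w i * t i ^ q ≤ (∑ i ∈ s, w i * t i) ^ q := by
  have hholder := Real.inner_le_weight_mul_Lp_of_nonneg s (p := q⁻¹) (one_le_inv₀ hq0 |>.mpr hq1)
    w (fun i => t i ^ q) hw (fun i => Real.rpow_nonneg (ht i) q)
  simp only [← Real.rpow_mul (ht _), mul_inv_cancel₀ hq0.ne', Real.rpow_one, inv_inv] at hholder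
  refine hholder.trans (mul_le_of_le_one_left
    (Real.rpow_nonneg (Finset.sum_nonneg fun i _ => mul_nonneg (hw i) (ht i)) q) ?_)
  exact Real.rpow_le_one (Finset.sum_nonneg fun i _ => hw i) hw1 (by linarith)

theorem sum_norm_inner_sq_le_of_pairwise_inner_eq_zero {𝕜 E ι : Type*} [RCLike 𝕜]
    [NormedAddCommGroup E] [InnerProductSpace 𝕜 E] {v : ι → E}
    (hnorm : ∀ i, v i ≠ 0 → ‖v i‖ = 1) (horth : Pairwise fun i j => ⟪v i, v j⟫_𝕜 = 0)
    (s : Finset ι) (x : E) : ∑ i ∈ s, ‖⟪v i, x⟫_𝕜‖ ^ 2 ≤ ‖x‖ ^ 2 := by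
  have hv : Orthonormal 𝕜 fun i : {i // v i ≠ 0} => v i :=
    ⟨fun i => hnorm i i.2, fun i j hij => horth (Subtype.coe_injective.ne hij)⟩
  classical
  calc ∑ i ∈ s, ‖⟪v i, x⟫_𝕜‖ ^ 2
      = ∑ i ∈ s.subtype (fun i => v i ≠ 0), ‖⟪v i, x⟫_𝕜‖ ^ 2 := by
        rw [Finset.sum_subtype_eq_sum_filter (fun i => ‖⟪v i, x⟫_𝕜‖ ^ 2),
          Finset.sum_filter_of_ne]
        intro i _ hi h0
        simp [h0] at hi
    _ ≤ ‖x‖ ^ 2 := hv.sum_inner_products_le x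

theorem Orthonormal.hasSum_norm_inner_sq_of_mem_closure {𝕜 E ι : Type*} [RCLike 𝕜]
    [NormedAddCommGroup E] [InnerProductSpace 𝕜 E] [CompleteSpace E] {v : ι → E}
    (hv : Orthonormal 𝕜 v) {x : E} (hx : x ∈ (span 𝕜 (Set.range v)).topologicalClosure) :
    HasSum (fun i => ‖⟪v i, x⟫_𝕜‖ ^ 2) (‖x‖ ^ 2) := by
  set U := (span 𝕜 (Set.range v)).topologicalClosure
  let w : ι → U := fun i => ⟨v i, le_topologicalClosure _ (subset_span ⟨i, rfl⟩)⟩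
  have hw : Orthonormal 𝕜 w := by
    simpa [Orthonormal, w] using hv
  have hdense : (span 𝕜 (Set.range w))ᗮ = ⊥ := by
    refine eq_bot_iff.mpr fun u hu => ?_
    have hu' : (u : E) ∈ Uᗮ := by
      rw [orthogonal_closure]
      refine (mem_orthogonal' _ _).mpr fun y hy => ?_
      induction hy using span_induction with
      | mem y hy =>
        obtain ⟨i, rfl⟩ := hy
        simpa [w] using
          inner_left_of_mem_orthogonal (K := span 𝕜 (Set.range w)) (subset_span ⟨i, rfl⟩) hu
      | zero => exact inner_zero_right _
      | add y z _ _ hy hz => rw [inner_add_right, hy, hz, add_zero]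
      | smul c y _ hy => rw [inner_smul_right, hy, mul_zero]
    simpa using inner_self_eq_zero.mp (inner_right_of_mem_orthogonal u.2 hu')
  let b := HilbertBasis.mkOfOrthogonalEqBot hw hdense
  have := lp.hasSum_norm (p := 2) (by norm_num) (b.repr ⟨x, hx⟩)
  rw [b.repr.norm_map] at this
  simp only [b.repr_apply_apply] at this
  convert this using 1 <;> simp [b, w]

theorem IsCompactOperator.exists_eigenvector_norm_of_isPositive {B : H →L[ℂ] H}
    (hB : IsCompactOperator B) (hpos : B.IsPositive) (hB0 : B ≠ 0) :
    ∃ x : H, ‖x‖ = 1 ∧ B x = (‖B‖ : ℂ) • x := by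
  have : Nontrivial H := not_subsingleton_iff_nontrivial.mp fun _ => hB0 (Subsingleton.elim _ _)
  have hspec : ((‖B‖ : ℝ) : ℂ) ∈ spectrum ℂ B := by
    have := CStarAlgebra.norm_mem_spectrum_of_nonneg ((nonneg_iff_isPositive B).mpr hpos)
    rwa [← spectrum.preimage_algebraMap ℂ] at this
  obtain ⟨x, hx⟩ := ((hB.hasEigenvalue_iff_mem_spectrum (by simpa using hB0)).mpr
    hspec).exists_hasEigenvector
  refine ⟨(‖x‖⁻¹ : ℂ) • x, by simp [norm_smul, hx.2], ?_⟩
  rw [map_smul, smul_comm, ← Module.End.mem_eigenspace_iff.mp hx.1]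
  rfl

-- `‖T P‖² = ‖(T P)† (T P)‖`, and `(T P)† (T P) = P T†T P` agrees with `T†T` on the invariant `U`.
theorem IsCompactOperator.exists_eigenvector_adjoint_comp_self {T : H →L[ℂ] H}
    (hT : IsCompactOperator T) (U : Submodule ℂ H) [U.HasOrthogonalProjection]
    (hU : U ∈ Module.End.invtSubmodule (adjoint T ∘L T : H →ₗ[ℂ] H))
    (hne : T ∘L U.starProjection ≠ 0) :
    ∃ x ∈ U, ‖x‖ = 1 ∧
      (adjoint T ∘L T) x = ((‖T ∘L U.starProjection‖ ^ 2 : ℝ) : ℂ) • x := by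
  set S := T ∘L U.starProjection
  have hBS : adjoint S ∘L S = U.starProjection ∘L (adjoint T ∘L T) ∘L U.starProjection := by
    simp [S, adjoint_comp, (isSelfAdjoint_starProjection U).adjoint_eq, comp_assoc]
  have hB0 : adjoint S ∘L S ≠ 0 := by
    rw [← norm_ne_zero_iff, norm_adjoint_comp_self]
    exact mul_ne_zero (norm_ne_zero_iff.mpr hne) (norm_ne_zero_iff.mpr hne)
  obtain ⟨x, hx1, hx⟩ := IsCompactOperator.exists_eigenvector_norm_of_isPositive
    ((hT.comp_clm U.starProjection).clm_comp (adjoint S)) (isPositive_adjoint_comp_self S) hB0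
  rw [norm_adjoint_comp_self, hBS] at hx
  have hxU : x ∈ U := by
    have hc : ((‖S‖ * ‖S‖ : ℝ) : ℂ) ≠ 0 := by simpa using hne
    rw [← inv_smul_smul₀ hc x, ← hx]
    exact U.smul_mem _ (U.starProjection_apply_mem _)
  refine ⟨x, hxU, hx1, ?_⟩
  have hAx : adjoint T (T x) ∈ U := hU hxU
  simpa [(U.starProjection_eq_self_iff).mpr hxU, (U.starProjection_eq_self_iff).mpr hAx, sq]
    using hx

theorem singularValue_nonneg {E : Type*} [NormedAddCommGroup E] [InnerProductSpace ℂ E]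
    (T : E →L[ℂ] E) (k : ℕ) : 0 ≤ singularValue T k :=
  Real.sInf_nonneg (by rintro _ ⟨F, -, rfl⟩; exact norm_nonneg _)

theorem singularValue_le_norm_comp_starProjection_orthogonal {E : Type*}
    [NormedAddCommGroup E] [InnerProductSpace ℂ E] (T : E →L[ℂ] E) {k : ℕ}
    (K : Submodule ℂ E) [FiniteDimensional ℂ K] (hK : Module.finrank ℂ K ≤ k) :
    singularValue T k ≤ ‖T ∘L Kᗮ.starProjection‖ := by
  have hrank : Module.rank ℂ (LinearMap.range ((T ∘L K.starProjection : E →L[ℂ] E) : E →ₗ[ℂ] E))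
      ≤ k := calc
    _ ≤ Module.rank ℂ (LinearMap.range (K.starProjection : E →ₗ[ℂ] E)) :=
      LinearMap.rank_comp_le_right _ _
    _ = Module.finrank ℂ K := by rw [range_starProjection, Module.finrank_eq_rank]
    _ ≤ k := by exact_mod_cast hK
  refine (csInf_le ?_ (Set.mem_image_of_mem (fun F : E →L[ℂ] E => ‖T - F‖) hrank)).trans_eq ?_
  · exact ⟨0, by rintro _ ⟨F, -, rfl⟩; exact norm_nonneg _⟩
  congr 1
  ext x
  simp [starProjection_orthogonal']

namespace ContinuousLinearMap

variable (T : H →L[ℂ] H)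

-- The `else` branch keeps every `schmidtVec n` a unit vector or zero; for compact `T` it is
-- taken only when `T` vanishes on `Kᗮ` (`norm_topEigenvector`).
noncomputable def topEigenvector (K : Submodule ℂ H) : H :=
  open Classical in
  if h : ∃ x ∈ Kᗮ, ‖x‖ = 1 ∧
      (adjoint T ∘L T) x = ((‖T ∘L Kᗮ.starProjection‖ ^ 2 : ℝ) : ℂ) • x
  then h.choose else 0

noncomputable def schmidtSpan : ℕ → Submodule ℂ H
  | 0 => ⊥
  | n + 1 => schmidtSpan n ⊔ ℂ ∙ T.topEigenvector (schmidtSpan n)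

noncomputable def schmidtVec (n : ℕ) : H := T.topEigenvector (T.schmidtSpan n)

noncomputable def schmidtVal (n : ℕ) : ℝ := ‖T ∘L (T.schmidtSpan n)ᗮ.starProjection‖

variable {T}

theorem schmidtVal_nonneg (n : ℕ) : 0 ≤ T.schmidtVal n := norm_nonneg _

theorem topEigenvector_mem_orthogonal (K : Submodule ℂ H) : T.topEigenvector K ∈ Kᗮ := by
  unfold topEigenvector
  split_ifs with h
  exacts [h.choose_spec.1, Kᗮ.zero_mem]

theorem adjoint_comp_self_topEigenvector (K : Submodule ℂ H) :
    (adjoint T ∘L T) (T.topEigenvector K) =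
      ((‖T ∘L Kᗮ.starProjection‖ ^ 2 : ℝ) : ℂ) • T.topEigenvector K := by
  unfold topEigenvector
  split_ifs with h
  exacts [h.choose_spec.2.2, by simp]

theorem norm_topEigenvector_of_ne_zero {K : Submodule ℂ H} (h : T.topEigenvector K ≠ 0) :
    ‖T.topEigenvector K‖ = 1 := by
  unfold topEigenvector at h ⊢
  split_ifs at h ⊢ with hex
  exacts [hex.choose_spec.2.1, absurd rfl h]

theorem norm_topEigenvector (hT : IsCompactOperator T) {K : Submodule ℂ H}
    (hK : K ∈ Module.End.invtSubmodule (adjoint T ∘L T : H →ₗ[ℂ] H))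
    (hne : T ∘L Kᗮ.starProjection ≠ 0) : ‖T.topEigenvector K‖ = 1 := by
  have hKo : Kᗮ ∈ Module.End.invtSubmodule (adjoint T ∘L T : H →ₗ[ℂ] H) :=
    (isPositive_adjoint_comp_self T).isSymmetric.orthogonalComplement_mem_invtSubmodule hK
  have hex := hT.exists_eigenvector_adjoint_comp_self Kᗮ hKo hne
  unfold topEigenvector
  rw [dif_pos hex]
  exact hex.choose_spec.2.1

theorem monotone_schmidtSpan : Monotone T.schmidtSpan :=
  monotone_nat_of_le_succ fun _ => le_sup_left

theorem schmidtVec_mem_schmidtSpan {i n : ℕ} (h : i < n) : T.schmidtVec i ∈ T.schmidtSpan n :=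
  monotone_schmidtSpan h (mem_sup_right (mem_span_singleton_self _))

theorem inner_schmidtVec_eq_zero : Pairwise fun i j => ⟪T.schmidtVec i, T.schmidtVec j⟫_ℂ = 0 := by
  intro i j hij
  rcases hij.lt_or_gt with h | h
  · exact inner_right_of_mem_orthogonal (schmidtVec_mem_schmidtSpan h)
      (topEigenvector_mem_orthogonal _)
  · exact inner_left_of_mem_orthogonal (schmidtVec_mem_schmidtSpan h)
      (topEigenvector_mem_orthogonal _)

theorem adjoint_comp_self_schmidtVec (n : ℕ) :
    (adjoint T ∘L T) (T.schmidtVec n) = ((T.schmidtVal n ^ 2 : ℝ) : ℂ) • T.schmidtVec n :=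
  adjoint_comp_self_topEigenvector _

theorem schmidtSpan_mem_invtSubmodule (n : ℕ) :
    T.schmidtSpan n ∈ Module.End.invtSubmodule (adjoint T ∘L T : H →ₗ[ℂ] H) := by
  induction n with
  | zero => exact Module.End.invtSubmodule.bot_mem _
  | succ n ih =>
    refine Module.End.invtSubmodule.sup_mem ih ?_
    rw [Module.End.mem_invtSubmodule_iff_forall_mem_of_mem]
    intro x hx
    obtain ⟨a, rfl⟩ := mem_span_singleton.mp hx
    rw [map_smul, coe_coe, adjoint_comp_self_topEigenvector]
    exact smul_mem _ _ (smul_mem _ _ (mem_span_singleton_self _))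

instance (n : ℕ) : FiniteDimensional ℂ (T.schmidtSpan n) := by
  induction n with
  | zero => exact Module.Finite.bot ℂ H
  | succ n ih => exact finite_sup _ _

theorem finrank_schmidtSpan_le (n : ℕ) : Module.finrank ℂ (T.schmidtSpan n) ≤ n := by
  induction n with
  | zero => exact (finrank_bot ℂ H).le
  | succ n ih =>
    calc Module.finrank ℂ (T.schmidtSpan (n + 1))
        ≤ Module.finrank ℂ (T.schmidtSpan n) + Module.finrank ℂ (ℂ ∙ T.schmidtVec n) :=
          finrank_add_le_finrank_add_finrank _ _
      _ ≤ n + 1 := add_le_add ih ((finrank_span_le_card _).trans (by simp))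

theorem norm_schmidtVec_of_ne_zero {n : ℕ} (h : T.schmidtVec n ≠ 0) : ‖T.schmidtVec n‖ = 1 :=
  norm_topEigenvector_of_ne_zero h

theorem norm_schmidtVec (hT : IsCompactOperator T) {n : ℕ} (h : T.schmidtVal n ≠ 0) :
    ‖T.schmidtVec n‖ = 1 :=
  norm_topEigenvector hT (schmidtSpan_mem_invtSubmodule n) (norm_ne_zero_iff.mp h)

theorem singularValue_le_schmidtVal (n : ℕ) : singularValue T n ≤ T.schmidtVal n :=
  singularValue_le_norm_comp_starProjection_orthogonal T _ (finrank_schmidtSpan_le n)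

theorem inner_apply_schmidtVec_apply (k : ℕ) (y : H) :
    ⟪T (T.schmidtVec k), T y⟫_ℂ = (T.schmidtVal k ^ 2 : ℂ) * ⟪T.schmidtVec k, y⟫_ℂ := by
  rw [← adjoint_inner_left, ← comp_apply, adjoint_comp_self_schmidtVec, inner_smul_left]
  simp

theorem norm_apply_schmidtVec (k : ℕ) :
    ‖T (T.schmidtVec k)‖ = T.schmidtVal k * ‖T.schmidtVec k‖ := by
  have h : ‖T (T.schmidtVec k)‖ ^ 2 = (T.schmidtVal k * ‖T.schmidtVec k‖) ^ 2 := by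
    rw [← inner_self_eq_norm_sq (𝕜 := ℂ), inner_apply_schmidtVec_apply, mul_pow,
      ← inner_self_eq_norm_sq (𝕜 := ℂ)]
    simp [← Complex.ofReal_pow]
  exact (pow_left_inj₀ (norm_nonneg _) (mul_nonneg (schmidtVal_nonneg k) (norm_nonneg _))
    two_ne_zero).mp h

theorem sum_schmidtVal_sq_mul_norm_inner_sq_le (s : Finset ℕ) (x : H) :
    ∑ k ∈ s, T.schmidtVal k ^ 2 * ‖⟪T.schmidtVec k, x⟫_ℂ‖ ^ 2 ≤ ‖T x‖ ^ 2 := by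
  set f : ℕ → H := fun k => ((T.schmidtVal k : ℂ)⁻¹) • T (T.schmidtVec k)
  have hf : ∀ k y, ⟪f k, T y⟫_ℂ = (T.schmidtVal k : ℂ) * ⟪T.schmidtVec k, y⟫_ℂ := by
    intro k y
    rw [inner_smul_left, inner_apply_schmidtVec_apply, ← mul_assoc, map_inv₀, Complex.conj_ofReal]
    congr 1
    rcases eq_or_ne (T.schmidtVal k : ℂ) 0 with h | h
    · simp [h]
    · field_simp
  have hnorm : ∀ k, f k ≠ 0 → ‖f k‖ = 1 := by
    intro k hk
    have hσ : T.schmidtVal k ≠ 0 := by rintro h; simp [f, h] at hk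
    have hη : T.schmidtVec k ≠ 0 := by rintro h; simp [f, h] at hk
    simp [f, norm_smul, norm_apply_schmidtVec, norm_schmidtVec_of_ne_zero hη,
      abs_of_nonneg (schmidtVal_nonneg k), hσ]
  have horth : Pairwise fun i j => ⟪f i, f j⟫_ℂ = 0 := by
    intro i j hij
    simp [f, hf, inner_schmidtVec_eq_zero hij]
  calc ∑ k ∈ s, T.schmidtVal k ^ 2 * ‖⟪T.schmidtVec k, x⟫_ℂ‖ ^ 2
      = ∑ k ∈ s, ‖⟪f k, T x⟫_ℂ‖ ^ 2 := by simp [hf, mul_pow]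
    _ ≤ ‖T x‖ ^ 2 := sum_norm_inner_sq_le_of_pairwise_inner_eq_zero hnorm horth s (T x)

theorem adjoint_apply_mem_topologicalClosure {V : Submodule ℂ H}
    (hV : Vᗮ ≤ T.ker) (z : H) : adjoint T z ∈ V.topologicalClosure := by
  rw [← orthogonal_orthogonal_eq_closure]
  refine orthogonal_le hV ?_
  rw [orthogonal_ker]
  exact le_topologicalClosure _ ⟨z, rfl⟩

theorem schmidtVec_mem_topologicalClosure {V : Submodule ℂ H} (hV : Vᗮ ≤ T.ker)
    {n : ℕ} (h : T.schmidtVal n ≠ 0) : T.schmidtVec n ∈ V.topologicalClosure := by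
  have hc : ((T.schmidtVal n ^ 2 : ℝ) : ℂ) ≠ 0 := by exact_mod_cast pow_ne_zero 2 h
  rw [← inv_smul_smul₀ hc (T.schmidtVec n), ← adjoint_comp_self_schmidtVec]
  exact smul_mem _ _ (adjoint_apply_mem_topologicalClosure hV _)

theorem ofReal_schmidtVal_rpow_eq_tsum (hT : IsCompactOperator T) {ξ : ℕ → H}
    (hξ : Orthonormal ℂ ξ) (hker : (span ℂ (Set.range ξ))ᗮ ≤ T.ker) {p : ℝ}
    (hp : 0 < p) (k : ℕ) :
    ENNReal.ofReal (T.schmidtVal k ^ p) =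
      ∑' n, ENNReal.ofReal (‖⟪T.schmidtVec k, ξ n⟫_ℂ‖ ^ 2 * T.schmidtVal k ^ p) := by
  rcases eq_or_ne (T.schmidtVal k) 0 with h | h
  · simp [h, Real.zero_rpow hp.ne']
  have hsum := hξ.hasSum_norm_inner_sq_of_mem_closure (schmidtVec_mem_topologicalClosure hker h)
  rw [norm_schmidtVec hT h, one_pow] at hsum
  simp_rw [ENNReal.ofReal_mul (sq_nonneg _), ENNReal.tsum_mul_right, norm_inner_symm,
    ← ENNReal.ofReal_tsum_of_nonneg (fun _ => sq_nonneg _) hsum.summable, hsum.tsum_eq,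
    ENNReal.ofReal_one, one_mul]

theorem tsum_ofReal_norm_inner_sq_mul_schmidtVal_rpow_le {x : H} (hx : ‖x‖ ≤ 1) {p : ℝ}
    (hp0 : 0 < p) (hp2 : p ≤ 2) :
    ∑' k, ENNReal.ofReal (‖⟪T.schmidtVec k, x⟫_ℂ‖ ^ 2 * T.schmidtVal k ^ p) ≤
      ENNReal.ofReal (‖T x‖ ^ p) := by
  have hsq : ∀ t : ℝ, 0 ≤ t → (t ^ 2) ^ (p / 2) = t ^ p := fun t ht => by
    rw [← Real.rpow_natCast, ← Real.rpow_mul ht]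
    congr 1
    ring
  refine ENNReal.tsum_le_of_sum_range_le fun N => ?_
  rw [← ENNReal.ofReal_sum_of_nonneg fun k _ =>
    mul_nonneg (sq_nonneg _) (Real.rpow_nonneg (schmidtVal_nonneg k) p)]
  refine ENNReal.ofReal_le_ofReal ?_
  have hbessel : ∑ k ∈ Finset.range N, ‖⟪T.schmidtVec k, x⟫_ℂ‖ ^ 2 ≤ 1 :=
    (sum_norm_inner_sq_le_of_pairwise_inner_eq_zero (fun _ => norm_schmidtVec_of_ne_zero)
      inner_schmidtVec_eq_zero _ x).trans (pow_le_one₀ (norm_nonneg x) hx)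
  calc ∑ k ∈ Finset.range N, ‖⟪T.schmidtVec k, x⟫_ℂ‖ ^ 2 * T.schmidtVal k ^ p
      = ∑ k ∈ Finset.range N, ‖⟪T.schmidtVec k, x⟫_ℂ‖ ^ 2 * (T.schmidtVal k ^ 2) ^ (p / 2) := by
        simp_rw [hsq _ (schmidtVal_nonneg _)]
    _ ≤ (∑ k ∈ Finset.range N, ‖⟪T.schmidtVec k, x⟫_ℂ‖ ^ 2 * T.schmidtVal k ^ 2) ^ (p / 2) :=
        Real.sum_mul_rpow_le_rpow_sum_mul _ (fun _ => sq_nonneg _) (fun _ => sq_nonneg _)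
          hbessel (by positivity) (by linarith)
    _ ≤ (‖T x‖ ^ 2) ^ (p / 2) := by
        gcongr
        simpa only [mul_comm] using sum_schmidtVal_sq_mul_norm_inner_sq_le _ x
    _ = ‖T x‖ ^ p := hsq _ (norm_nonneg _)

end ContinuousLinearMap

/-- For a compact operator `T`, an orthonormal system `ξ` spanning a subspace
containing the support of `T`, and `0 < p ≤ 2`, one has
`∑_k μ_k(T)^p ≤ ∑_k ‖T ξ_k‖^p` (Simon, Trace ideals, Remark p.17). -/
theorem singularValue_pow_sum_le (T : H →L[ℂ] H)
    (hT : IsCompactOperator (T : H →L[ℂ] H))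
    (ξ : ℕ → H) (hξ : Orthonormal ℂ ξ)
    (hsupp : ∀ x : H, (∀ k, inner ℂ (ξ k) x = (0 : ℂ)) → T x = 0)
    (p : ℝ) (hp0 : 0 < p) (hp2 : p ≤ 2) :
    ∑' k, ENNReal.ofReal (singularValue T k ^ p) ≤
      ∑' k, ENNReal.ofReal (‖T (ξ k)‖ ^ p) := by
  have hker : (span ℂ (Set.range ξ))ᗮ ≤ T.ker := fun u hu =>
    hsupp u fun k => inner_right_of_mem_orthogonal (subset_span (Set.mem_range_self k)) hu
  calc ∑' k, ENNReal.ofReal (singularValue T k ^ p)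
      ≤ ∑' k, ENNReal.ofReal (T.schmidtVal k ^ p) := ENNReal.tsum_le_tsum fun k =>
        ENNReal.ofReal_le_ofReal (Real.rpow_le_rpow (singularValue_nonneg T k)
          (singularValue_le_schmidtVal k) hp0.le)
    _ = ∑' k, ∑' n, ENNReal.ofReal (‖⟪T.schmidtVec k, ξ n⟫_ℂ‖ ^ 2 * T.schmidtVal k ^ p) :=
        tsum_congr (ofReal_schmidtVal_rpow_eq_tsum hT hξ hker hp0)
    _ = ∑' n, ∑' k, ENNReal.ofReal (‖⟪T.schmidtVec k, ξ n⟫_ℂ‖ ^ 2 * T.schmidtVal k ^ p) :=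
        ENNReal.tsum_comm
    _ ≤ ∑' n, ENNReal.ofReal (‖T (ξ n)‖ ^ p) := ENNReal.tsum_le_tsum fun n =>
        tsum_ofReal_norm_inner_sq_mul_schmidtVal_rpow_le (hξ.1 n).le hp0 hp2
end

section
/- Let c, d > 0, and for p ∈ (d, 2] define h(p) := A(p)^{p/2} · (d/(p-d)) where A(p) is bounded on (d,2]. Setting T a compact operator with ∑_k μ_k(T)^p ≤ c·d/(p-d) for all p ∈ (d,2], it follows that sup_{N≥2} (1/log N) ∑_{k=1}^N μ_k(T)^d < ∞, i.e. the sequence (μ_k(T)^d) has logarithmically bounded partial sums. -/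
set_option synthInstance.maxHeartbeats 1000000
set_option maxHeartbeats 1000000

open ContinuousLinearMap

variable {H : Type*} [NormedAddCommGroup H] [InnerProductSpace ℂ H] [CompleteSpace H]

/-- Pointwise splitting: for `0 ≤ a`, `0 < t` and `0 ≤ d < p`,
`a ^ d ≤ t ^ (d - p) * a ^ p + t ^ d`. -/
lemma rpow_le_split {a t d p : ℝ} (ha : 0 ≤ a) (ht : 0 < t) (hd : 0 ≤ d)
    (hdp : d < p) : a ^ d ≤ t ^ (d - p) * a ^ p + t ^ d := by
  rcases le_or_gt a t with h | h
  · have h1 : a ^ d ≤ t ^ d := Real.rpow_le_rpow ha h hd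
    have h2 : 0 ≤ t ^ (d - p) * a ^ p :=
      mul_nonneg (Real.rpow_nonneg ht.le _) (Real.rpow_nonneg ha _)
    linarith
  · have ha0 : 0 < a := ht.trans h
    have h1 : a ^ (d - p) ≤ t ^ (d - p) :=
      Real.rpow_le_rpow_of_nonpos ht h.le (by linarith)
    have h2 : a ^ d = a ^ (d - p) * a ^ p := by
      rw [← Real.rpow_add ha0]; ring_nf
    have h3 : 0 ≤ a ^ p := Real.rpow_nonneg ha _
    have h4 : 0 ≤ t ^ d := Real.rpow_nonneg ht.le _
    nlinarith [mul_le_mul_of_nonneg_right h1 h3]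

/-- If a compact operator `T` satisfies `∑_k μ_k(T)^p ≤ c·d/(p-d)` for all
`p ∈ (d,2]`, then the partial sums of `μ_k(T)^d` grow at most logarithmically,
i.e. `sup_{N≥2} (1/log N) ∑_{k=1}^N μ_k(T)^d < ∞`: `T ∈ L^{(d,∞)}`. -/
theorem macaev_of_schatten_bounds (T : H →L[ℂ] H) (hT : IsCompactOperator T)
    (c d : ℝ) (hc : 0 < c) (hd0 : 0 < d) (hd2 : d < 2)
    (hbound : ∀ p : ℝ, d < p → p ≤ 2 →
      (Summable fun k => singularValue T k ^ p) ∧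
      ∑' k, singularValue T k ^ p ≤ c * d / (p - d)) :
    ∃ M : ℝ, ∀ N : ℕ, 2 ≤ N →
      (∑ k ∈ Finset.range N, singularValue T k ^ d) ≤ M * Real.log N := by
  have hμ0 : ∀ k, 0 ≤ singularValue T k := by
    intro k
    apply Real.sInf_nonneg
    rintro x ⟨F, -, rfl⟩
    exact norm_nonneg _
  have hlog2 : (0:ℝ) < Real.log 2 := Real.log_pos one_lt_two
  obtain ⟨C, hC⟩ : ∃ C : ℝ, C = Real.exp 1 * c + 1 / Real.log 2 := ⟨_, rfl⟩
  have hC0 : 0 ≤ C := by rw [hC]; positivity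
  obtain ⟨N₀, hN₀⟩ : ∃ N₀ : ℕ, N₀ = max 2 ⌈Real.exp (d / (2 - d))⌉₊ := ⟨_, rfl⟩
  obtain ⟨S₀, hS₀⟩ : ∃ S₀ : ℝ, S₀ = ∑ k ∈ Finset.range N₀, singularValue T k ^ d :=
    ⟨_, rfl⟩
  have hS₀0 : 0 ≤ S₀ := hS₀ ▸ Finset.sum_nonneg fun k _ => Real.rpow_nonneg (hμ0 k) _
  refine ⟨max C (S₀ / Real.log 2), fun N hN2 => ?_⟩
  have hN1 : (1:ℝ) < N := by exact_mod_cast Nat.lt_of_lt_of_le one_lt_two hN2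
  have hNpos : (0:ℝ) < N := by linarith
  have hNlog : Real.log 2 ≤ Real.log N := Real.log_le_log two_pos (by exact_mod_cast hN2)
  have hlN : 0 < Real.log N := hlog2.trans_le hNlog
  rcases le_or_gt (d / (2 - d)) (Real.log N) with hcase | hcase
  · -- main case: choose p = d + d / log N
    obtain ⟨p, hp⟩ : ∃ p : ℝ, p = d + d / Real.log N := ⟨_, rfl⟩
    have hdiv : 0 < d / Real.log N := div_pos hd0 hlN
    have hpd : p - d = d / Real.log N := by rw [hp]; ring
    have hdp : d < p := by rw [hp]; linarith
    have hp2 : p ≤ 2 := by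
      have h2d : 0 < 2 - d := by linarith
      have h1 : d ≤ Real.log N * (2 - d) := (div_le_iff₀ h2d).mp hcase
      have h2 : d / Real.log N ≤ 2 - d := (div_le_iff₀ hlN).mpr (by linarith)
      rw [hp]; linarith
    obtain ⟨hsum, htsum⟩ := hbound p hdp hp2
    obtain ⟨t, htdef⟩ : ∃ t : ℝ, t = (N : ℝ) ^ (-1 / d) := ⟨_, rfl⟩
    have ht : 0 < t := htdef ▸ Real.rpow_pos_of_pos hNpos _
    have htd : t ^ d = (N : ℝ)⁻¹ := by
      rw [htdef, ← Real.rpow_mul hNpos.le,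
        show (-1 / d) * d = -1 by field_simp, Real.rpow_neg_one]
    have hte : t ^ (d - p) = Real.exp 1 := by
      rw [htdef, ← Real.rpow_mul hNpos.le,
        show (-1 / d) * (d - p) = (p - d) / d by ring, hpd,
        show d / Real.log N / d = 1 / Real.log N by rw [div_right_comm, div_self hd0.ne'],
        Real.rpow_def_of_pos hNpos,
        show Real.log N * (1 / Real.log N) = 1 by field_simp]
    have hsum_le : ∑ k ∈ Finset.range N, singularValue T k ^ p ≤ c * d / (p - d) :=
      le_trans (Summable.sum_le_tsum (Finset.range N) (fun k _ => Real.rpow_nonneg (hμ0 k) p)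
        hsum) htsum
    have hbd : c * d / (p - d) = c * Real.log N := by
      rw [hpd, div_div_eq_mul_div]; field_simp
    have h1le : 1 ≤ Real.log N / Real.log 2 := (one_le_div hlog2).mpr hNlog
    calc ∑ k ∈ Finset.range N, singularValue T k ^ d
        ≤ ∑ k ∈ Finset.range N, (t ^ (d - p) * singularValue T k ^ p + t ^ d) :=
          Finset.sum_le_sum fun k _ => rpow_le_split (hμ0 k) ht hd0.le hdp
      _ = t ^ (d - p) * ∑ k ∈ Finset.range N, singularValue T k ^ p + (N : ℝ) * t ^ d := by
          rw [Finset.sum_add_distrib, ← Finset.mul_sum, Finset.sum_const,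
            Finset.card_range, nsmul_eq_mul]
      _ ≤ Real.exp 1 * (c * Real.log N) + 1 := by
          rw [hte, htd, mul_inv_cancel₀ hNpos.ne']
          have := mul_le_mul_of_nonneg_left hsum_le (Real.exp_pos 1).le
          rw [hbd] at this
          linarith
      _ ≤ C * Real.log N := by
          have hCeq : C * Real.log N =
              Real.exp 1 * (c * Real.log N) + Real.log N / Real.log 2 := by
            rw [hC]; ring
          linarith
      _ ≤ max C (S₀ / Real.log 2) * Real.log N :=
          mul_le_mul_of_nonneg_right (le_max_left _ _) hlN.le
  · -- small N: bounded by S₀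
    have hNN₀ : N ≤ N₀ := by
      have h1 : (N:ℝ) < Real.exp (d / (2 - d)) := by
        calc (N:ℝ) = Real.exp (Real.log N) := (Real.exp_log hNpos).symm
          _ < _ := Real.exp_lt_exp.mpr hcase
      have h2 : (N:ℝ) < (⌈Real.exp (d / (2 - d))⌉₊ : ℝ) :=
        h1.trans_le (Nat.le_ceil _)
      have h3 : N < ⌈Real.exp (d / (2 - d))⌉₊ := by exact_mod_cast h2
      rw [hN₀]
      exact le_trans h3.le (le_max_right _ _)
    calc ∑ k ∈ Finset.range N, singularValue T k ^ d
        ≤ S₀ := hS₀ ▸ Finset.sum_le_sum_of_subset_of_nonneg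
          (Finset.range_subset_range.mpr hNN₀) fun k _ _ => Real.rpow_nonneg (hμ0 k) _
      _ = (S₀ / Real.log 2) * Real.log 2 := by field_simp
      _ ≤ max C (S₀ / Real.log 2) * Real.log N := by
          apply mul_le_mul (le_max_right _ _) hNlog hlog2.le
          exact le_trans (div_nonneg hS₀0 hlog2.le) (le_max_right _ _)
end

section
/- Let K be a compact metric space, S = {1,…,N}, and F_i : K → K contractions with ratios in (0,1). Given positive weights μ₁,…,μ_N with ∑ μᵢ = 1, there exists a unique Borel probability measure μ on K such that ∫_K f dμ = ∑_{i∈S} μᵢ ∫_K (f ∘ F_i) dμ for all continuous f : K → ℝ. -/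
open MeasureTheory
open scoped NNReal

namespace SelfSimilarAux

set_option linter.unusedSectionVars false
set_option linter.unusedVariables false
set_option maxHeartbeats 1000000

variable {N : ℕ} {w : Fin N → ℝ}

/-- weights extended to `ℕ`. -/
noncomputable def W (w : Fin N → ℝ) : ℕ → ℝ := fun k => if h : k < N then w ⟨k, h⟩ else 0

/-- cumulative weights. -/
noncomputable def cc (w : Fin N → ℝ) : ℕ → ℝ := fun k => ∑ j ∈ Finset.range k, W w j

theorem W_nonneg (hw : ∀ i, 0 < w i) (k : ℕ) : 0 ≤ W w k := by
  unfold W; split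
  · exact (hw _).le
  · exact le_rfl

theorem cc_zero : cc w 0 = 0 := by simp [cc]

theorem cc_succ (i : Fin N) : cc w ((i : ℕ) + 1) = cc w i + w i := by
  simp [cc, Finset.sum_range_succ, W, i.isLt]

theorem cc_mono (hw : ∀ i, 0 < w i) : Monotone (cc w) := by
  intro a b hab
  exact Finset.sum_le_sum_of_subset_of_nonneg (Finset.range_subset_range.2 hab)
    (fun k _ _ => W_nonneg hw k)

theorem cc_nonneg (hw : ∀ i, 0 < w i) (k : ℕ) : 0 ≤ cc w k :=
  cc_zero (w := w) ▸ cc_mono hw (Nat.zero_le k)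

theorem cc_N (hsum : ∑ i, w i = 1) : cc w N = 1 := by
  rw [cc, ← hsum, Finset.sum_range]
  refine Finset.sum_congr rfl fun i _ => ?_
  simp [W, i.isLt]

theorem cc_le_one (hw : ∀ i, 0 < w i) (hsum : ∑ i, w i = 1) (k : ℕ) (hk : k ≤ N) :
    cc w k ≤ 1 := by
  rw [← cc_N hsum]; exact cc_mono hw hk

/-- the intervals `[cc i, cc (i+1))` are pairwise disjoint. -/
theorem pick_unique (hw : ∀ i, 0 < w i) {t : ℝ} {i j : Fin N}
    (hi : cc w i ≤ t ∧ t < cc w ((i : ℕ) + 1)) (hj : cc w j ≤ t ∧ t < cc w ((j : ℕ) + 1)) :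
    i = j := by
  rcases lt_trichotomy i j with h | h | h
  · exact absurd ((hi.2.trans_le (cc_mono hw (Nat.succ_le_of_lt h))).trans_le hj.1)
      (lt_irrefl t)
  · exact h
  · exact absurd ((hj.2.trans_le (cc_mono hw (Nat.succ_le_of_lt h))).trans_le hi.1)
      (lt_irrefl t)

theorem exists_pick (hw : ∀ i, 0 < w i) (hsum : ∑ i, w i = 1) {t : ℝ}
    (ht : t ∈ Set.Ico (0 : ℝ) 1) :
    ∃ i : Fin N, cc w i ≤ t ∧ t < cc w ((i : ℕ) + 1) := by
  have hN : 0 < N := by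
    by_contra h
    push_neg at h
    interval_cases N
    simp at hsum
  classical
  set S : Finset ℕ := (Finset.range N).filter (fun k => cc w k ≤ t) with hS
  have h0S : 0 ∈ S := by
    simp [hS, hN, cc_zero, ht.1]
  have hSne : S.Nonempty := ⟨0, h0S⟩
  set i := S.max' hSne with hi
  have hiS : i ∈ S := S.max'_mem hSne
  have hiN : i < N := Finset.mem_range.1 (Finset.mem_filter.1 hiS).1
  have hit : cc w i ≤ t := (Finset.mem_filter.1 hiS).2
  refine ⟨⟨i, hiN⟩, hit, ?_⟩
  by_contra hcon
  push_neg at hcon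
  rcases Nat.lt_or_ge (i+1) N with h1 | h1
  · have : i + 1 ∈ S := Finset.mem_filter.2 ⟨Finset.mem_range.2 h1, hcon⟩
    exact absurd (S.le_max' _ this) (by omega)
  · have : (1:ℝ) ≤ t := by
      calc (1:ℝ) = cc w N := (cc_N hsum).symm
      _ ≤ cc w (i+1) := cc_mono hw h1
      _ ≤ t := hcon
    exact absurd ht.2 (not_lt.2 this)

/-- which subinterval `t` belongs to. -/
noncomputable def pick (hN : 0 < N) (w : Fin N → ℝ) : ℝ → Fin N := fun t =>
  if h : ∃ i : Fin N, cc w i ≤ t ∧ t < cc w ((i : ℕ) + 1) then h.choose else ⟨0, hN⟩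

theorem pick_eq (hN : 0 < N) (hw : ∀ i, 0 < w i) {t : ℝ} {i : Fin N}
    (hi : cc w i ≤ t ∧ t < cc w ((i : ℕ) + 1)) : pick hN w t = i := by
  have h : ∃ i : Fin N, cc w i ≤ t ∧ t < cc w ((i : ℕ) + 1) := ⟨i, hi⟩
  rw [pick, dif_pos h]
  exact pick_unique hw h.choose_spec hi

theorem measurable_pick (hN : 0 < N) (hw : ∀ i, 0 < w i) : Measurable (pick hN w) := by
  apply measurable_to_countable'
  intro i
  classical
  have key : pick hN w ⁻¹' {i} =
      Set.Ico (cc w i) (cc w ((i:ℕ)+1)) ∪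
        (if i = (⟨0, hN⟩ : Fin N) then (⋃ j : Fin N, Set.Ico (cc w j) (cc w ((j:ℕ)+1)))ᶜ
          else ∅) := by
    ext t
    simp only [Set.mem_preimage, Set.mem_singleton_iff, Set.mem_union, Set.mem_Ico]
    constructor
    · intro h
      by_cases he : ∃ j : Fin N, cc w j ≤ t ∧ t < cc w ((j:ℕ)+1)
      · obtain ⟨j, hj⟩ := he
        left
        rw [← h, pick_eq hN hw hj]
        exact hj
      · right
        have hdef : pick hN w t = ⟨0, hN⟩ := by rw [pick, dif_neg he]
        rw [← h, hdef, if_pos rfl]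
        simp only [Set.mem_compl_iff, Set.mem_iUnion, Set.mem_Ico]
        push_neg at he ⊢
        exact he
    · rintro (h | h)
      · exact pick_eq hN hw h
      · by_cases hd : i = (⟨0, hN⟩ : Fin N)
        · rw [if_pos hd] at h
          simp only [Set.mem_compl_iff, Set.mem_iUnion, Set.mem_Ico] at h
          push_neg at h
          rw [pick, dif_neg, hd]
          rintro ⟨j, hj1, hj2⟩
          exact absurd hj2 (not_lt.2 (h j hj1))
        · rw [if_neg hd] at h
          exact h.elim
  rw [key]
  refine measurableSet_Ico.union ?_
  split
  · exact (MeasurableSet.iUnion (fun j => measurableSet_Ico)).compl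
  · exact MeasurableSet.empty


variable {K : Type*} [MetricSpace K] [CompactSpace K] [Nonempty K]
  [MeasurableSpace K] [BorelSpace K] {F : Fin N → K → K} {r : Fin N → ℝ≥0}

noncomputable def rho (r : Fin N → ℝ≥0) : ℝ≥0 := Finset.univ.sup r

theorem rho_lt_one (hr : ∀ i, r i < 1) : rho r < 1 := by
  rw [rho, Finset.sup_lt_iff]
  · exact fun i _ => hr i
  · exact zero_lt_one

/-- finite-level coding maps -/
noncomputable def phiN (hN : 0 < N) (w : Fin N → ℝ) (F : Fin N → K → K) (x₀ : K) :
    ℕ → ℝ → K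
  | 0 => fun _ => x₀
  | (n+1) => fun t =>
      F (pick hN w t) (phiN hN w F x₀ n ((t - cc w (pick hN w t)) / w (pick hN w t)))


theorem measurable_phiN (hN : 0 < N) (hw : ∀ i, 0 < w i)
    (hF : ∀ i, LipschitzWith (r i) (F i)) (x₀ : K) (n : ℕ) : Measurable (phiN hN w F x₀ n) := by
  induction n with
  | zero => exact measurable_const
  | succ n ih =>
      have h1 : Measurable (fun p : ℝ × Fin N => F p.2 (phiN hN w F x₀ n ((p.1 - cc w p.2) / w p.2))) := by
        apply measurable_from_prod_countable_left
        intro i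
        have : Measurable (fun t : ℝ => (t - cc w i) / w i) :=
          (measurable_id.sub measurable_const).div_const _
        exact ((hF i).continuous.measurable).comp (ih.comp this)
      have h2 : Measurable (fun t : ℝ => (t, pick hN w t)) :=
        measurable_id.prodMk (measurable_pick hN hw)
      exact h1.comp h2

/-- key algebraic identity at finite level -/
theorem phiN_succ_eq (x₀ : K) (hN : 0 < N) (hw : ∀ i, 0 < w i) (i : Fin N) {s : ℝ}
    (hs : s ∈ Set.Ico (0:ℝ) 1) (n : ℕ) :
    phiN hN w F x₀ (n+1) (cc w i + w i * s) = F i (phiN hN w F x₀ n s) := by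
  have hmem : cc w i ≤ cc w i + w i * s ∧ cc w i + w i * s < cc w ((i:ℕ)+1) := by
    constructor
    · nlinarith [hw i, hs.1]
    · rw [cc_succ]
      nlinarith [hw i, hs.2]
  have hp : pick hN w (cc w i + w i * s) = i := pick_eq hN hw hmem
  show F _ _ = _
  rw [hp]
  congr 1
  rw [add_sub_cancel_left, mul_comm, mul_div_assoc, div_self (hw i).ne', mul_one]

theorem dist_phiN_succ (hN : 0 < N) (hw : ∀ i, 0 < w i)
    (hF : ∀ i, LipschitzWith (r i) (F i)) (x₀ : K) (n : ℕ) (t : ℝ) :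
    dist (phiN hN w F x₀ n t) (phiN hN w F x₀ (n+1) t) ≤
      Metric.diam (Set.univ : Set K) * (rho r : ℝ) ^ n := by
  induction n generalizing t with
  | zero =>
      simpa using Metric.dist_le_diam_of_mem
        (Metric.isBounded_of_compactSpace (α := K)) (Set.mem_univ _) (Set.mem_univ _)
  | succ n ih =>
      show dist (F _ _) (F _ _) ≤ _
      set i := pick hN w t
      calc dist _ _ ≤ (r i : ℝ) * dist (phiN hN w F x₀ n _) (phiN hN w F x₀ (n+1) _) :=
            (hF i).dist_le_mul _ _
      _ ≤ (rho r : ℝ) * (Metric.diam (Set.univ : Set K) * (rho r : ℝ) ^ n) := by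
            apply mul_le_mul
            · exact_mod_cast Finset.le_sup (Finset.mem_univ i)
            · exact ih _
            · exact dist_nonneg
            · exact (rho r).coe_nonneg
      _ = Metric.diam (Set.univ : Set K) * (rho r : ℝ) ^ (n+1) := by ring

theorem exists_Phi (hN : 0 < N) (hw : ∀ i, 0 < w i)
    (hF : ∀ i, LipschitzWith (r i) (F i)) (x₀ : K) (hr : ∀ i, r i < 1) :
    ∃ Φ : ℝ → K, Measurable Φ ∧
      ∀ t, Filter.Tendsto (fun n => phiN hN w F x₀ n t) Filter.atTop (nhds (Φ t)) := by
  have hcau : ∀ t, CauchySeq (fun n => phiN hN w F x₀ n t) := by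
    intro t
    exact cauchySeq_of_le_geometric (rho r : ℝ) (Metric.diam (Set.univ : Set K))
      (by exact_mod_cast rho_lt_one hr) (fun n => dist_phiN_succ hN hw hF x₀ n t)
  choose Φ hΦ using fun t => cauchySeq_tendsto_of_complete (hcau t)
  exact ⟨Φ, measurable_of_tendsto_metrizable (fun n => measurable_phiN hN hw hF x₀ n)
    (tendsto_pi_nhds.2 hΦ), hΦ⟩


theorem exists_Phi'' (hN : 0 < N) (hw : ∀ i, 0 < w i)
    (hF : ∀ i, LipschitzWith (r i) (F i)) (x₀ : K) (hr : ∀ i, r i < 1) :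
    ∃ Φ : ℝ → K, Measurable Φ ∧
      ∀ i : Fin N, ∀ s ∈ Set.Ico (0:ℝ) 1, Φ (cc w i + w i * s) = F i (Φ s) := by
  obtain ⟨Φ, hm, ht⟩ := exists_Phi (F := F) hN hw hF x₀ hr
  refine ⟨Φ, hm, fun i s hs => ?_⟩
  have h1 : Filter.Tendsto (fun n => phiN hN w F x₀ (n+1) (cc w i + w i * s))
      Filter.atTop (nhds (Φ (cc w i + w i * s))) :=
    (ht _).comp (Filter.tendsto_add_atTop_nat 1)
  have h2 : (fun n => phiN hN w F x₀ (n+1) (cc w i + w i * s))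
      = fun n => F i (phiN hN w F x₀ n s) :=
    funext fun n => phiN_succ_eq x₀ hN hw i hs n
  have h3 : Filter.Tendsto (fun n => F i (phiN hN w F x₀ n s))
      Filter.atTop (nhds (F i (Φ s))) :=
    ((hF i).continuous.tendsto _).comp (ht s)
  rw [h2] at h1
  exact tendsto_nhds_unique h1 h3
theorem exists_selfsimilar (hN : 0 < N) (hr : ∀ i, r i < 1)
    (hF : ∀ i, LipschitzWith (r i) (F i)) (hw : ∀ i, 0 < w i) (hsum : ∑ i, w i = 1) :
    ∃ μ : Measure K, IsProbabilityMeasure μ ∧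
      ∀ f : C(K, ℝ), ∫ x, f x ∂μ = ∑ i, w i * ∫ x, f (F i x) ∂μ := by
  classical
  obtain ⟨Φ, hΦm, hkey⟩ := exists_Phi'' (F := F) hN hw hF (Classical.arbitrary K) hr
  set P : Measure ℝ := volume.restrict (Set.Ico (0:ℝ) 1) with hP
  have hPprob : IsProbabilityMeasure P := by
    constructor
    rw [hP, Measure.restrict_apply_univ, Real.volume_Ico]
    norm_num
  set μ : Measure K := P.map Φ with hμ
  have hμprob : IsProbabilityMeasure μ := Measure.isProbabilityMeasure_map hΦm.aemeasurable
  refine ⟨μ, hμprob, fun f => ?_⟩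
  -- the sub intervals
  set I : Fin N → Set ℝ := fun i => Set.Ico (cc w i) (cc w ((i:ℕ)+1)) with hI
  have hIm : ∀ i, MeasurableSet (I i) := fun i => measurableSet_Ico
  have hIdisj : Pairwise (Function.onFun Disjoint I) := by
    intro i j hij
    rw [Function.onFun, hI, Set.Ico_disjoint_Ico]
    rcases lt_or_gt_of_ne hij with h | h
    · exact le_trans (min_le_left _ _) (le_max_of_le_right (cc_mono hw (Nat.succ_le_of_lt h)))
    · exact le_trans (min_le_right _ _) (le_max_of_le_left (cc_mono hw (Nat.succ_le_of_lt h)))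
  have hIunion : (⋃ i, I i) = Set.Ico (0:ℝ) 1 := by
    ext t
    simp only [Set.mem_iUnion, hI, Set.mem_Ico]
    constructor
    · rintro ⟨i, h1, h2⟩
      exact ⟨le_trans (cc_nonneg hw i) h1,
        lt_of_lt_of_le h2 (cc_le_one hw hsum _ i.isLt)⟩
    · intro ht
      obtain ⟨i, hi⟩ := exists_pick hw hsum ht
      exact ⟨i, hi⟩
  -- integrability
  have hbound : ∀ t : ℝ, ‖f (Φ t)‖ ≤ ‖f‖ := fun t => f.norm_coe_le_norm _
  have hmeas : Measurable fun t => f (Φ t) := f.continuous.measurable.comp hΦm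
  have hint : Integrable (fun t => f (Φ t)) P :=
    (integrable_const ‖f‖).mono' hmeas.aestronglyMeasurable
      (Filter.Eventually.of_forall hbound)
  -- first rewrite
  have step1 : ∫ x, f x ∂μ = ∫ t, f (Φ t) ∂P :=
    integral_map hΦm.aemeasurable f.continuous.aestronglyMeasurable
  have step2 : ∫ t, f (Φ t) ∂P = ∑ i, ∫ t in I i, f (Φ t) ∂volume := by
    rw [hP, ← hIunion, integral_iUnion hIm hIdisj, tsum_fintype]
    rw [hIunion]
    exact hint
  -- change of variables on each piece
  have step3 : ∀ i, ∫ t in I i, f (Φ t) ∂volume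
      = w i * ∫ s in Set.Ico (0:ℝ) 1, f (F i (Φ s)) ∂volume := by
    intro i
    have hv : (0:ℝ) < w i := hw i
    have hmapvol : Measure.map (fun s : ℝ => cc w i + w i * s) volume
        = ENNReal.ofReal (w i)⁻¹ • volume := by
      have : (fun s : ℝ => cc w i + w i * s) = (cc w i + ·) ∘ (w i * ·) := rfl
      rw [this, ← Measure.map_map (measurable_const_add _) (measurable_const_mul _),
        Real.map_volume_mul_left hv.ne', Measure.map_smul,
        Measure.IsAddLeftInvariant.map_add_left_eq_self (cc w i),
        abs_of_pos (inv_pos.2 hv)]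
    have hψm : Measurable (fun s : ℝ => cc w i + w i * s) :=
      (measurable_const_mul _).const_add _
    have hpre : (fun s : ℝ => cc w i + w i * s) ⁻¹' (I i) = Set.Ico (0:ℝ) 1 := by
      ext s
      simp only [Set.mem_preimage, hI, Set.mem_Ico, cc_succ]
      constructor
      · rintro ⟨h1, h2⟩
        constructor
        · nlinarith
        · nlinarith
      · rintro ⟨h1, h2⟩
        constructor
        · nlinarith
        · nlinarith
    have hmeq : volume.restrict (I i)
        = Measure.map (fun s : ℝ => cc w i + w i * s) (ENNReal.ofReal (w i) • P) := by
      rw [hP, ← Measure.restrict_smul, ← hpre, ← Measure.restrict_map hψm (hIm i),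
        Measure.map_smul, hmapvol, smul_smul, ← ENNReal.ofReal_mul hv.le,
        mul_inv_cancel₀ hv.ne', ENNReal.ofReal_one, one_smul]
    rw [hmeq, integral_map hψm.aemeasurable hmeas.aestronglyMeasurable ]
    · rw [integral_smul_measure]
      simp only [ENNReal.toReal_ofReal hv.le, smul_eq_mul]
      congr 1
      rw [hP]
      refine setIntegral_congr_fun measurableSet_Ico (fun s hs => ?_)
      rw [hkey i s hs]
  -- change variables back on each piece
  have step4 : ∀ i, ∫ s in Set.Ico (0:ℝ) 1, f (F i (Φ s)) ∂volume = ∫ x, f (F i x) ∂μ := by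
    intro i
    rw [hμ]
    exact (integral_map (φ := Φ) (f := fun x => f (F i x)) hΦm.aemeasurable
      (f.continuous.comp (hF i).continuous).aestronglyMeasurable).symm
  rw [step1, step2]
  exact Finset.sum_congr rfl fun i _ => by rw [step3 i, step4 i]

/-- the dual (Koopman-type) operator on continuous functions -/
noncomputable def T (w : Fin N → ℝ) (F : Fin N → K → K)
    (hF : ∀ i, LipschitzWith (r i) (F i)) : C(K, ℝ) → C(K, ℝ) :=
  fun g => ∑ i, w i • g.comp ⟨F i, (hF i).continuous⟩

theorem T_apply (hF : ∀ i, LipschitzWith (r i) (F i)) (g : C(K, ℝ)) (x : K) :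
    T w F hF g x = ∑ i, w i * g (F i x) := by
  simp [T]

/-- a continuous function is integrable against any finite measure on a compact space -/
theorem cint (g : C(K, ℝ)) (σ : Measure K) [IsFiniteMeasure σ] :
    Integrable (fun x => g x) σ :=
  (integrable_const ‖g‖).mono' g.continuous.measurable.aestronglyMeasurable
    (Filter.Eventually.of_forall fun x => g.norm_coe_le_norm x)

/-- invariance of the integral under `T` -/
theorem integral_T (hF : ∀ i, LipschitzWith (r i) (F i)) {σ : Measure K}
    [IsProbabilityMeasure σ]
    (hσ : ∀ f : C(K, ℝ), ∫ x, f x ∂σ = ∑ i, w i * ∫ x, f (F i x) ∂σ)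
    (g : C(K, ℝ)) : ∫ x, g x ∂σ = ∫ x, T w F hF g x ∂σ := by
  rw [hσ g]
  have : ∫ x, T w F hF g x ∂σ = ∑ i, ∫ x, w i * g (F i x) ∂σ := by
    simp only [T_apply]
    rw [integral_finset_sum]
    intro i _
    exact (cint ((w i • g.comp ⟨F i, (hF i).continuous⟩ : C(K,ℝ))) σ).congr
      (Filter.Eventually.of_forall fun x => by simp)
  rw [this]
  exact Finset.sum_congr rfl fun i _ => by rw [integral_const_mul]

theorem integral_T_iter (hF : ∀ i, LipschitzWith (r i) (F i)) {σ : Measure K}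
    [IsProbabilityMeasure σ]
    (hσ : ∀ f : C(K, ℝ), ∫ x, f x ∂σ = ∑ i, w i * ∫ x, f (F i x) ∂σ)
    (g : C(K, ℝ)) (n : ℕ) : ∫ x, g x ∂σ = ∫ x, (T w F hF)^[n] g x ∂σ := by
  induction n with
  | zero => simp
  | succ n ih =>
      rw [ih, Function.iterate_succ_apply']
      exact integral_T hF hσ _

/-- oscillation control -/
theorem T_osc (hF : ∀ i, LipschitzWith (r i) (F i)) (hN : 0 < N)
    (hw : ∀ i, 0 < w i) (hsum : ∑ i, w i = 1) (g : C(K, ℝ)) (x y : K) :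
    ∃ i : Fin N, dist (T w F hF g x) (T w F hF g y) ≤ dist (g (F i x)) (g (F i y)) := by
  have hne : (Finset.univ : Finset (Fin N)).Nonempty := ⟨⟨0, hN⟩, Finset.mem_univ _⟩
  obtain ⟨i₀, -, hmax⟩ := Finset.exists_max_image Finset.univ
    (fun i => dist (g (F i x)) (g (F i y))) hne
  refine ⟨i₀, ?_⟩
  rw [Real.dist_eq, T_apply, T_apply, ← Finset.sum_sub_distrib]
  calc |∑ i, (w i * g (F i x) - w i * g (F i y))|
      ≤ ∑ i, |w i * g (F i x) - w i * g (F i y)| := Finset.abs_sum_le_sum_abs _ _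
    _ = ∑ i, w i * |g (F i x) - g (F i y)| := by
        refine Finset.sum_congr rfl fun i _ => ?_
        rw [← mul_sub, abs_mul, abs_of_pos (hw i)]
    _ ≤ ∑ i, w i * dist (g (F i₀ x)) (g (F i₀ y)) := by
        refine Finset.sum_le_sum fun i _ => ?_
        exact mul_le_mul_of_nonneg_left (by rw [← Real.dist_eq]; exact hmax i (Finset.mem_univ i))
          (hw i).le
    _ = dist (g (F i₀ x)) (g (F i₀ y)) := by rw [← Finset.sum_mul, hsum, one_mul]

theorem T_iter_osc (hF : ∀ i, LipschitzWith (r i) (F i)) (hN : 0 < N)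
    (hw : ∀ i, 0 < w i) (hsum : ∑ i, w i = 1) (g : C(K, ℝ)) (n : ℕ) (x y : K) :
    ∃ u v : K, dist u v ≤ (rho r : ℝ) ^ n * dist x y ∧
      dist ((T w F hF)^[n] g x) ((T w F hF)^[n] g y) ≤ dist (g u) (g v) := by
  induction n generalizing x y with
  | zero => exact ⟨x, y, by simp, by simp⟩
  | succ n ih =>
      obtain ⟨i, hi⟩ := T_osc hF hN hw hsum ((T w F hF)^[n] g) x y
      obtain ⟨u, v, huv, hd⟩ := ih (F i x) (F i y)
      refine ⟨u, v, ?_, ?_⟩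
      · calc dist u v ≤ (rho r : ℝ) ^ n * dist (F i x) (F i y) := huv
          _ ≤ (rho r : ℝ) ^ n * ((rho r : ℝ) * dist x y) := by
              refine mul_le_mul_of_nonneg_left ?_ (by positivity)
              calc dist (F i x) (F i y) ≤ (r i : ℝ) * dist x y := (hF i).dist_le_mul x y
                _ ≤ (rho r : ℝ) * dist x y := by
                    refine mul_le_mul_of_nonneg_right ?_ dist_nonneg
                    exact_mod_cast Finset.le_sup (Finset.mem_univ i)
          _ = (rho r : ℝ) ^ (n+1) * dist x y := by ring
      · calc dist ((T w F hF)^[n+1] g x) ((T w F hF)^[n+1] g y)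
            = dist (T w F hF ((T w F hF)^[n] g) x) (T w F hF ((T w F hF)^[n] g) y) := by
              rw [Function.iterate_succ_apply']
          _ ≤ dist ((T w F hF)^[n] g (F i x)) ((T w F hF)^[n] g (F i y)) := hi
          _ ≤ dist (g u) (g v) := hd

theorem close_to_point {σ : Measure K} [IsProbabilityMeasure σ] (g : C(K, ℝ)) (y₀ : K)
    {ε : ℝ} (hε : 0 ≤ ε) (h : ∀ x, dist (g x) (g y₀) ≤ ε) :
    dist (∫ x, g x ∂σ) (g y₀) ≤ ε := by
  have : (∫ x, g x ∂σ) - g y₀ = ∫ x, (g x - g y₀) ∂σ := by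
    rw [integral_sub (cint g σ) (integrable_const _), integral_const]
    simp
  rw [Real.dist_eq, this]
  calc |∫ x, (g x - g y₀) ∂σ| ≤ ε * (σ Set.univ).toReal := by
        rw [← Real.norm_eq_abs]
        apply norm_integral_le_of_norm_le_const
        exact Filter.Eventually.of_forall fun x => by
          rw [Real.norm_eq_abs, ← Real.dist_eq]; exact h x
    _ = ε := by simp

theorem integral_eq_of_selfsimilar (hN : 0 < N) (hr : ∀ i, r i < 1)
    (hF : ∀ i, LipschitzWith (r i) (F i)) (hw : ∀ i, 0 < w i) (hsum : ∑ i, w i = 1)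
    {μ ν : Measure K} [IsProbabilityMeasure μ] [IsProbabilityMeasure ν]
    (hμ : ∀ f : C(K, ℝ), ∫ x, f x ∂μ = ∑ i, w i * ∫ x, f (F i x) ∂μ)
    (hν : ∀ f : C(K, ℝ), ∫ x, f x ∂ν = ∑ i, w i * ∫ x, f (F i x) ∂ν)
    (f : C(K, ℝ)) : ∫ x, f x ∂μ = ∫ x, f x ∂ν := by
  apply eq_of_forall_dist_le
  intro ε hε
  -- uniform continuity
  obtain ⟨δ, hδ, hδ'⟩ := Metric.uniformContinuous_iff.1
    (CompactSpace.uniformContinuous_of_continuous f.continuous) (ε/2) (by linarith)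
  -- choose n
  set C := Metric.diam (Set.univ : Set K) with hC
  have hC0 : 0 ≤ C := Metric.diam_nonneg
  have htend : Filter.Tendsto (fun n => (rho r : ℝ) ^ n * C) Filter.atTop (nhds 0) := by
    rw [show (0:ℝ) = 0 * C by ring]
    exact (tendsto_pow_atTop_nhds_zero_of_lt_one (rho r).coe_nonneg
      (by exact_mod_cast rho_lt_one hr)).mul_const C
  obtain ⟨n, hn⟩ := (htend.eventually (gt_mem_nhds hδ)).exists
  -- oscillation of T^[n] f is ≤ ε/2
  have hosc : ∀ x y : K, dist ((T w F hF)^[n] f x) ((T w F hF)^[n] f y) ≤ ε/2 := by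
    intro x y
    obtain ⟨u, v, huv, hd⟩ := T_iter_osc hF hN hw hsum f n x y
    have : dist u v < δ := by
      calc dist u v ≤ (rho r : ℝ) ^ n * dist x y := huv
        _ ≤ (rho r : ℝ) ^ n * C := by
            refine mul_le_mul_of_nonneg_left ?_ (by positivity)
            exact Metric.dist_le_diam_of_mem
              (Metric.isBounded_of_compactSpace) (Set.mem_univ _) (Set.mem_univ _)
        _ < δ := hn
    exact hd.trans (hδ' this).le
  set y₀ : K := Classical.arbitrary K
  calc dist (∫ x, f x ∂μ) (∫ x, f x ∂ν)
      = dist (∫ x, (T w F hF)^[n] f x ∂μ) (∫ x, (T w F hF)^[n] f x ∂ν) := by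
        rw [← integral_T_iter hF hμ f n, ← integral_T_iter hF hν f n]
    _ ≤ dist (∫ x, (T w F hF)^[n] f x ∂μ) ((T w F hF)^[n] f y₀)
        + dist ((T w F hF)^[n] f y₀) (∫ x, (T w F hF)^[n] f x ∂ν) := dist_triangle _ _ _
    _ ≤ ε/2 + ε/2 := by
        refine add_le_add (close_to_point _ y₀ (by linarith) fun x => hosc x y₀) ?_
        rw [dist_comm]
        exact close_to_point _ y₀ (by linarith) fun x => hosc x y₀
    _ = ε := by ring

theorem measure_eq_of_integral_eq {μ ν : Measure K} [IsProbabilityMeasure μ]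
    [IsProbabilityMeasure ν]
    (h : ∀ f : C(K, ℝ), ∫ x, f x ∂μ = ∫ x, f x ∂ν) : μ = ν := by
  apply ext_of_forall_lintegral_eq_of_IsFiniteMeasure
  intro f
  have hc : Continuous fun x => ((f x : ℝ≥0) : ℝ) := NNReal.continuous_coe.comp f.continuous
  have key := h ⟨fun x => ((f x : ℝ≥0) : ℝ), hc⟩
  rw [lintegral_coe_eq_integral (fun x => f x) (cint ⟨_, hc⟩ μ),
    lintegral_coe_eq_integral (fun x => f x) (cint ⟨_, hc⟩ ν)]
  exact congrArg ENNReal.ofReal key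


end SelfSimilarAux

/-- Existence and uniqueness of the self-similar (Hutchinson) measure: for an
iterated function system of contractions `Fᵢ` on a compact metric space `K` and
positive weights `μᵢ` summing to `1`, there is a unique Borel probability measure
`μ` with `∫ f dμ = ∑ᵢ μᵢ ∫ f∘Fᵢ dμ` for all continuous `f`. -/
theorem exists_unique_selfsimilar_measure
    {K : Type*} [MetricSpace K] [CompactSpace K] [Nonempty K]
    [MeasurableSpace K] [BorelSpace K]
    (N : ℕ) (hN : 1 ≤ N) (F : Fin N → K → K) (r : Fin N → ℝ≥0)
    (hr : ∀ i, r i < 1) (hF : ∀ i, LipschitzWith (r i) (F i))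
    (w : Fin N → ℝ) (hw : ∀ i, 0 < w i) (hsum : ∑ i, w i = 1) :
    ∃! μ : Measure K, IsProbabilityMeasure μ ∧
      ∀ f : C(K, ℝ), ∫ x, f x ∂μ = ∑ i, w i * ∫ x, f (F i x) ∂μ := by
  have hN0 : 0 < N := hN
  obtain ⟨μ, hμp, hμe⟩ := SelfSimilarAux.exists_selfsimilar hN0 hr hF hw hsum
  refine ⟨μ, ⟨hμp, hμe⟩, ?_⟩
  rintro ν ⟨hνp, hνe⟩
  have := hνp
  exact SelfSimilarAux.measure_eq_of_integral_eq fun f =>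
    SelfSimilarAux.integral_eq_of_selfsimilar hN0 hr hF hw hsum hνe hμe f
end
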